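/- arXiv:2006.16631 — 4 statements merged into one kernel-verified Lean document; each statement's English description precedes it below -/
import Mathlib

section
/- Let X, Y, P be symmetric n×n real matrices with [[X, 0], [0, -Y]] ≤ [[P, -P], [-P, P]] as 2n×2n block matrices. Then for every symmetric n×n matrix C such that [[I, C], [C, I]] is positive semidefinite, one has tr(X - Y) ≤ 2 tr((I - C)P). -/
/-!
Pair the two positive semidefinite block matrices by the trace: `tr(N M) ≥ 0` for `N, M ⪰ 0`
(write `N = Bᴴ B`, so `tr(N M) = tr(B M Bᴴ)`). With `N = [[I, C], [C, I]]` and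
`M = [[P - X, -P], [-P, P + Y]]`, expanding the block product gives
`tr(N M) = 2 tr((I - C) P) - tr(X - Y)`.
-/

namespace Matrix

open scoped ComplexOrder

theorem trace_fromBlocks {l m α : Type*} [Fintype l] [Fintype m] [AddCommMonoid α]
    (A : Matrix l l α) (B : Matrix l m α) (C : Matrix m l α) (D : Matrix m m α) :
    (fromBlocks A B C D).trace = A.trace + D.trace := by
  simp [trace, Fintype.sum_sum_type]

theorem trace_fromBlocks_mul_fromBlocks {l m α : Type*} [Fintype l] [Fintype m]
    [NonUnitalNonAssocSemiring α]
    (A : Matrix l l α) (B : Matrix l m α) (C : Matrix m l α) (D : Matrix m m α)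
    (A' : Matrix l l α) (B' : Matrix l m α) (C' : Matrix m l α) (D' : Matrix m m α) :
    (fromBlocks A B C D * fromBlocks A' B' C' D').trace =
      (A * A').trace + (B * C').trace + ((C * B').trace + (D * D').trace) := by
  rw [fromBlocks_multiply, trace_fromBlocks, trace_add, trace_add]

theorem PosSemidef.trace_mul_nonneg {n 𝕜 : Type*} [Fintype n] [RCLike 𝕜] {N M : Matrix n n 𝕜}
    (hN : N.PosSemidef) (hM : M.PosSemidef) : 0 ≤ (N * M).trace := by
  classical
  open scoped MatrixOrder in
  obtain ⟨B, rfl⟩ := CStarAlgebra.nonneg_iff_eq_star_mul_self.mp hN.nonneg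
  rw [mul_assoc, trace_mul_comm, star_eq_conjTranspose]
  exact (hM.mul_mul_conjTranspose_same B).trace_nonneg

end Matrix

open Matrix

theorem stmt1_general (n : ℕ) (P X Y C : Matrix (Fin n) (Fin n) ℝ)
    (hblock : (Matrix.fromBlocks P (-P) (-P) P - Matrix.fromBlocks X 0 0 (-Y)).PosSemidef)
    (hCpsd : (Matrix.fromBlocks 1 C C 1).PosSemidef) :
    (X - Y).trace ≤ 2 * ((1 - C) * P).trace := by
  have hexpand : (fromBlocks 1 C C 1 * (fromBlocks P (-P) (-P) P - fromBlocks X 0 0 (-Y))).trace =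
      2 * ((1 - C) * P).trace - (X - Y).trace := by
    rw [sub_eq_add_neg (fromBlocks P _ _ _), fromBlocks_neg, fromBlocks_add,
      trace_fromBlocks_mul_fromBlocks]
    simp only [mul_add, mul_sub, sub_mul, one_mul, mul_neg, neg_zero, add_zero, neg_neg,
      trace_add, trace_sub, trace_neg]
    ring
  linarith [hexpand ▸ hCpsd.trace_mul_nonneg hblock]

theorem stmt1 (n : ℕ) (P X Y C : Matrix (Fin n) (Fin n) ℝ)
    (hP : P.IsSymm) (hX : X.IsSymm) (hY : Y.IsSymm) (hC : C.IsSymm)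
    (hblock : (Matrix.fromBlocks P (-P) (-P) P - Matrix.fromBlocks X 0 0 (-Y)).PosSemidef)
    (hCpsd : (Matrix.fromBlocks 1 C C 1).PosSemidef) :
    (X - Y).trace ≤ 2 * ((1 - C) * P).trace :=
  stmt1_general n P X Y C hblock hCpsd
end

section
/- Let X, Y, P be symmetric n×n real matrices with [[X, 0], [0, -Y]] ≤ [[P, -P], [-P, P]], and let e ∈ ℝⁿ be a unit vector. Then tr(X - Y) ≤ 4 eᵀ P e. -/
/-!
Compress the block inequality along `x ↦ (x, Cx)`, where `C = I - 2 e eᵀ` is the reflection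
through `e⊥`: this gives `0 ≤ tr(P - X) - 2 tr(P C) + tr(C (P + Y) C)`. Since `C² = I` and
`tr(P C) = tr P - 2 eᵀ P e`, the right-hand side is `tr(Y - X) + 4 eᵀ P e`.
-/

open Matrix

namespace Matrix

theorem PosSemidef.trace_fromBlocks_compress_nonneg {m n R : Type*} [Fintype m] [Fintype n]
    [DecidableEq m] [Ring R] [PartialOrder R] [StarRing R] [AddLeftMono R]
    {A : Matrix m m R} {B : Matrix m n R} {B' : Matrix n m R} {D : Matrix n n R}
    (h : (fromBlocks A B B' D).PosSemidef) (C : Matrix n m R) :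
    0 ≤ trace A + trace (B * C) + trace (Cᴴ * B') + trace (Cᴴ * D * C) := by
  have := (h.conjTranspose_mul_mul_same (fromRows 1 C)).trace_nonneg
  rw [conjTranspose_fromRows_eq_fromCols_conjTranspose, conjTranspose_one, Matrix.mul_assoc,
    fromBlocks_mul_fromRows, fromCols_mul_fromRows] at this
  simpa only [Matrix.mul_one, Matrix.one_mul, Matrix.mul_add, trace_add, Matrix.mul_assoc,
    add_assoc] using this

section Householder

variable {n R : Type*} [DecidableEq n] [CommRing R]

def householder (e : n → R) : Matrix n n R :=
  1 - (2 : R) • vecMulVec e e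

theorem householder_transpose (e : n → R) : (householder e)ᵀ = householder e := by
  simp [householder, transpose_vecMulVec]

variable [Fintype n]

theorem householder_mul_self {e : n → R} (he : e ⬝ᵥ e = 1) :
    householder e * householder e = 1 := by
  have hsq : vecMulVec e e * vecMulVec e e = vecMulVec e e := by
    rw [vecMulVec_mul_vecMulVec, he, one_smul]
  simp only [householder, Matrix.sub_mul, Matrix.mul_sub, Matrix.one_mul, Matrix.mul_one,
    Matrix.smul_mul, Matrix.mul_smul, hsq]
  module

theorem trace_mul_householder (P : Matrix n n R) (e : n → R) :
    trace (P * householder e) = trace P - 2 * (e ⬝ᵥ (P *ᵥ e)) := by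
  rw [householder, Matrix.mul_sub, Matrix.mul_one, Matrix.mul_smul, mul_vecMulVec, trace_sub,
    trace_smul, trace_vecMulVec, dotProduct_comm, smul_eq_mul]

end Householder

end Matrix

theorem stmt3_general (n : ℕ) (P X Y : Matrix (Fin n) (Fin n) ℝ)
    (hblock : (Matrix.fromBlocks P (-P) (-P) P - Matrix.fromBlocks X 0 0 (-Y)).PosSemidef)
    (e : Fin n → ℝ) (he : e ⬝ᵥ e = 1) :
    (X - Y).trace ≤ 4 * (e ⬝ᵥ (P *ᵥ e)) := by
  have hdiff : fromBlocks P (-P) (-P) P - fromBlocks X 0 0 (-Y)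
      = fromBlocks (P - X) (-P) (-P) (P + Y) := by
    simp only [sub_eq_add_neg, fromBlocks_neg, fromBlocks_add, neg_zero, add_zero, neg_neg]
  rw [hdiff] at hblock
  set H := householder e
  have key := hblock.trace_fromBlocks_compress_nonneg H
  rw [conjTranspose_eq_transpose_of_trivial, householder_transpose, trace_mul_comm H (-P),
    trace_mul_comm (H * (P + Y)), ← Matrix.mul_assoc, householder_mul_self he, Matrix.one_mul,
    neg_mul, trace_neg, trace_mul_householder] at key
  simp only [trace_sub, trace_add] at key ⊢
  linarith

theorem stmt3 (n : ℕ) (P X Y : Matrix (Fin n) (Fin n) ℝ)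
    (hP : P.IsSymm) (hX : X.IsSymm) (hY : Y.IsSymm)
    (hblock : (Matrix.fromBlocks P (-P) (-P) P - Matrix.fromBlocks X 0 0 (-Y)).PosSemidef)
    (e : Fin n → ℝ) (he : e ⬝ᵥ e = 1) :
    (X - Y).trace ≤ 4 * (e ⬝ᵥ (P *ᵥ e)) :=
  stmt3_general n P X Y hblock e he
end

section
/- Let α, β : [0,∞) → [0,∞) and define the quasilinear isotropic operator F(p, X) = -tr[(α(|p|) p pᵀ/|p|² + β(|p|)(I - p pᵀ/|p|²)) X] for p ≠ 0. Suppose e is a unit vector, q > 0, and X, Y are symmetric matrices with [[X,0],[0,-Y]] ≤ [[P,-P],[-P,P]] where, in an orthonormal basis with first vector e, P = diag((1/2)φ'', φ'/(2s), …, φ'/(2s)). Then F(q e, Y) - F(q e, X) ≤ 2 α(q) φ''. -/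
/-! Write `E = e eᵀ`. At `p = q e` the coefficient matrix of `F` is
`α q • E + β q • (1 - E)`, so
`F (q e) Y - F (q e) X = α q * eᵀ (X - Y) e + β q * tr ((1 - E) (X - Y))`.
Compressing the block inequality with the columns `(1, 1)` gives `X ≤ Y`, which makes the
`β`-term nonpositive because `1 - E` is an orthogonal projection; compressing with `(1, -1)`
gives `X - Y ≤ 4 P`, and `eᵀ P e = φ'' / 2`. -/

namespace Matrix

variable {m n R : Type*} [Fintype m] [Fintype n]

lemma trace_vecMulVec_mul [CommSemiring R] (u v : m → R) (Z : Matrix m m R) :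
    (vecMulVec u v * Z).trace = v ⬝ᵥ Z *ᵥ u := by
  rw [vecMulVec_mul, trace_vecMulVec, dotProduct_comm, dotProduct_mulVec]

section PosSemidef

variable [CommRing R] [PartialOrder R] [StarRing R]

lemma PosSemidef.compress_fromBlocks {A B C D : Matrix m m R}
    (h : (fromBlocks A B C D).PosSemidef) (U V : Matrix m n R) :
    (Uᴴ * A * U + Vᴴ * C * U + Uᴴ * B * V + Vᴴ * D * V).PosSemidef := by
  have := h.conjTranspose_mul_mul_same (fromRows U V)
  rwa [conjTranspose_fromRows_eq_fromCols_conjTranspose, fromCols_mul_fromBlocks,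
    fromCols_mul_fromRows, Matrix.add_mul, Matrix.add_mul, ← add_assoc] at this

lemma dotProduct_mulVec_le_trace [DecidableEq m] [AddLeftMono R]
    {D : Matrix m m R} (hD : D.PosSemidef) {e : m → R} (he : star e ⬝ᵥ e = 1) :
    star e ⬝ᵥ D *ᵥ e ≤ D.trace := by
  set S : Matrix m m R := 1 - vecMulVec e (star e)
  have hS : Sᴴ = S := by
    simp [S, conjTranspose_sub, conjTranspose_vecMulVec]
  have hSS : S * S = S := by
    simp only [S, sub_mul, mul_sub, one_mul, mul_one, vecMulVec_mul_vecMulVec, he, one_smul]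
    abel
  have := (hD.conjTranspose_mul_mul_same S).trace_nonneg
  rw [hS, trace_mul_cycle, hSS, sub_mul, one_mul, trace_sub, trace_vecMulVec_mul] at this
  exact sub_nonneg.mp this

section ComparisonBlock

variable [DecidableEq m] {P X Y : Matrix m m R}
  (h : (fromBlocks P (-P) (-P) P - fromBlocks X 0 0 (-Y)).PosSemidef)
include h

lemma posSemidef_sub_of_posSemidef_fromBlocks : (Y - X).PosSemidef := by
  rw [sub_eq_add_neg, fromBlocks_neg, fromBlocks_add] at h
  convert h.compress_fromBlocks (1 : Matrix m m R) 1 using 1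
  simp only [conjTranspose_one, Matrix.one_mul, Matrix.mul_one]
  abel

lemma posSemidef_four_nsmul_add_sub_of_posSemidef_fromBlocks : (4 • P + Y - X).PosSemidef := by
  rw [sub_eq_add_neg, fromBlocks_neg, fromBlocks_add] at h
  convert h.compress_fromBlocks (1 : Matrix m m R) (-1) using 1
  simp only [conjTranspose_one, conjTranspose_neg, Matrix.one_mul, Matrix.mul_one,
    Matrix.neg_mul, Matrix.mul_neg]
  abel

end ComparisonBlock

end PosSemidef

section Axial

variable [DecidableEq m] {e : m → ℝ} (a b : ℝ)

lemma dotProduct_mulVec_axial (he : e ⬝ᵥ e = 1) :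
    e ⬝ᵥ (a • vecMulVec e e + b • (1 - vecMulVec e e)) *ᵥ e = a := by
  simp [add_mulVec, smul_mulVec, sub_mulVec, vecMulVec_mulVec, he]

lemma trace_axial_mul (Z : Matrix m m ℝ) :
    ((a • vecMulVec e e + b • (1 - vecMulVec e e)) * Z).trace
      = a * (e ⬝ᵥ Z *ᵥ e) + b * (Z.trace - e ⬝ᵥ Z *ᵥ e) := by
  simp only [Matrix.add_mul, Matrix.smul_mul, Matrix.sub_mul, Matrix.one_mul, trace_add,
    trace_smul, trace_sub, trace_vecMulVec_mul, smul_eq_mul]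

end Axial

end Matrix

open Matrix

section Isotropic

variable {m : Type*} [Fintype m] [DecidableEq m] (α β : ℝ → ℝ)

noncomputable def isotropicCoeff (p : m → ℝ) : Matrix m m ℝ :=
  (α √(p ⬝ᵥ p) / (p ⬝ᵥ p)) • vecMulVec p p
    + β √(p ⬝ᵥ p) • (1 - (p ⬝ᵥ p)⁻¹ • vecMulVec p p)

lemma isotropicCoeff_smul {e : m → ℝ} (he : e ⬝ᵥ e = 1) {q : ℝ} (hq : 0 < q) :
    isotropicCoeff α β (q • e) = α q • vecMulVec e e + β q • (1 - vecMulVec e e) := by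
  have hqe : (q • e) ⬝ᵥ (q • e) = q ^ 2 := by
    rw [smul_dotProduct, dotProduct_smul, he, smul_eq_mul, smul_eq_mul]; ring
  have hcα : α q / q ^ 2 * (q * q) = α q := by field_simp
  have hcβ : (q ^ 2)⁻¹ * (q * q) = 1 := by field_simp
  simp only [isotropicCoeff, hqe, Real.sqrt_sq hq.le, vecMulVec_smul, smul_vecMulVec, smul_smul,
    hcα, hcβ, one_smul]

end Isotropic

theorem stmt12_general (n : ℕ) (α β : ℝ → ℝ) (hα : ∀ r, 0 ≤ α r) (hβ : ∀ r, 0 ≤ β r)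
    (F : (Fin (n+1) → ℝ) → Matrix (Fin (n+1)) (Fin (n+1)) ℝ → ℝ)
    (hF : ∀ p X, F p X =
      -(((α (Real.sqrt (p ⬝ᵥ p)) / (p ⬝ᵥ p)) • Matrix.vecMulVec p p
        + β (Real.sqrt (p ⬝ᵥ p)) •
          ((1 : Matrix (Fin (n+1)) (Fin (n+1)) ℝ) - (p ⬝ᵥ p)⁻¹ • Matrix.vecMulVec p p))
        * X).trace)
    (e : Fin (n+1) → ℝ) (he : e ⬝ᵥ e = 1)
    (q s φ' φ'' : ℝ) (hq : 0 < q)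
    (P X Y : Matrix (Fin (n+1)) (Fin (n+1)) ℝ)
    (hP : P = ((1:ℝ)/2 * φ'') • Matrix.vecMulVec e e
      + (φ' / (2 * s)) • ((1 : Matrix (Fin (n+1)) (Fin (n+1)) ℝ) - Matrix.vecMulVec e e))
    (hblock : (Matrix.fromBlocks P (-P) (-P) P - Matrix.fromBlocks X 0 0 (-Y)).PosSemidef) :
    F (q • e) Y - F (q • e) X ≤ 2 * α q * φ'' := by
  have hF_smul (Z) :
      F (q • e) Z = -(α q * (e ⬝ᵥ Z *ᵥ e) + β q * (Z.trace - e ⬝ᵥ Z *ᵥ e)) := by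
    rw [hF]
    change -(isotropicCoeff α β (q • e) * Z).trace = _
    rw [isotropicCoeff_smul α β he hq, trace_axial_mul]
  have haxial : e ⬝ᵥ X *ᵥ e - e ⬝ᵥ Y *ᵥ e ≤ 2 * φ'' := by
    have := (posSemidef_four_nsmul_add_sub_of_posSemidef_fromBlocks hblock)
      |>.dotProduct_mulVec_nonneg e
    rw [star_trivial, sub_mulVec, add_mulVec, smul_mulVec, dotProduct_sub, dotProduct_add,
      dotProduct_smul, hP, dotProduct_mulVec_axial _ _ he, nsmul_eq_mul] at this
    linarith
  have htransverse : X.trace - e ⬝ᵥ X *ᵥ e ≤ Y.trace - e ⬝ᵥ Y *ᵥ e := by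
    have := dotProduct_mulVec_le_trace (posSemidef_sub_of_posSemidef_fromBlocks hblock)
      (e := e) (by rwa [star_trivial])
    rw [star_trivial, sub_mulVec, dotProduct_sub, trace_sub] at this
    linarith
  rw [hF_smul, hF_smul]
  linarith [mul_le_mul_of_nonneg_left haxial (hα q), mul_le_mul_of_nonneg_left htransverse (hβ q)]

theorem stmt12 (n : ℕ) (α β : ℝ → ℝ) (hα : ∀ r, 0 ≤ α r) (hβ : ∀ r, 0 ≤ β r)
    (F : (Fin (n+1) → ℝ) → Matrix (Fin (n+1)) (Fin (n+1)) ℝ → ℝ)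
    (hF : ∀ p X, F p X =
      -(((α (Real.sqrt (p ⬝ᵥ p)) / (p ⬝ᵥ p)) • Matrix.vecMulVec p p
        + β (Real.sqrt (p ⬝ᵥ p)) •
          ((1 : Matrix (Fin (n+1)) (Fin (n+1)) ℝ) - (p ⬝ᵥ p)⁻¹ • Matrix.vecMulVec p p))
        * X).trace)
    (e : Fin (n+1) → ℝ) (he : e ⬝ᵥ e = 1)
    (q s φ' φ'' : ℝ) (hq : 0 < q) (hs : 0 < s)
    (P X Y : Matrix (Fin (n+1)) (Fin (n+1)) ℝ)
    (hP : P = ((1:ℝ)/2 * φ'') • Matrix.vecMulVec e e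
      + (φ' / (2 * s)) • ((1 : Matrix (Fin (n+1)) (Fin (n+1)) ℝ) - Matrix.vecMulVec e e))
    (hX : X.IsSymm) (hY : Y.IsSymm)
    (hblock : (Matrix.fromBlocks P (-P) (-P) P - Matrix.fromBlocks X 0 0 (-Y)).PosSemidef) :
    F (q • e) Y - F (q • e) X ≤ 2 * α q * φ'' :=
  stmt12_general n α β hα hβ F hF e he q s φ' φ'' hq P X Y hP hblock
end

section
/- Suppose the oscillation bound |u(x) - u(y)| ≤ M·erf(|x-y|/(4√t)) holds for all x, y ∈ ℝⁿ, for fixed t > 0 and M > 0, and that u is differentiable at x. Then |Du(x)| ≤ M/(2√(π t)). -/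
open Real

/- Since `exp (-r²) ≤ 1`, `erf z ≤ (2 / √π) z` for `z ≥ 0`, so the oscillation bound makes `u`
Lipschitz at `x` with constant `M (2 / √π) / (4 √t) = M / (2 √(π t))`, which bounds `‖Du(x)‖`. -/

theorem intervalIntegral.integral_exp_neg_sq_le {z : ℝ} (hz : 0 ≤ z) :
    ∫ r in (0 : ℝ)..z, exp (-r ^ 2) ≤ z := by
  calc ∫ r in (0 : ℝ)..z, exp (-r ^ 2)
      ≤ ∫ _ in (0 : ℝ)..z, (1 : ℝ) :=
        intervalIntegral.integral_mono_on hz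
          ((by fun_prop : Continuous fun r : ℝ => exp (-r ^ 2)).intervalIntegrable _ _)
          intervalIntegrable_const
          fun r _ => exp_le_one_iff.2 (neg_nonpos.2 (sq_nonneg r))
    _ = z := by simp

theorem stmt18_general (n : ℕ) (M t : ℝ) (hM : 0 < M)
    (erf : ℝ → ℝ)
    (herf : ∀ z, erf z = 2 / Real.sqrt π * ∫ r in (0:ℝ)..z, Real.exp (-r^2))
    (u : EuclideanSpace ℝ (Fin n) → ℝ)
    (hosc : ∀ x y, |u x - u y| ≤ M * erf (‖x - y‖ / (4 * Real.sqrt t)))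
    (x : EuclideanSpace ℝ (Fin n)) :
    ‖fderiv ℝ u x‖ ≤ M / (2 * Real.sqrt (π * t)) := by
  have erf_le : ∀ z, 0 ≤ z → erf z ≤ 2 / √π * z := fun z hz => by
    rw [herf]
    gcongr
    exact intervalIntegral.integral_exp_neg_sq_le hz
  refine norm_fderiv_le_of_lip' ℝ (by positivity) (Filter.Eventually.of_forall fun y => ?_)
  calc ‖u y - u x‖ = |u y - u x| := norm_eq_abs _
    _ ≤ M * erf (‖y - x‖ / (4 * √t)) := hosc y x
    _ ≤ M * (2 / √π * (‖y - x‖ / (4 * √t))) := by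
        gcongr
        exact erf_le _ (by positivity)
    _ = M / (2 * √(π * t)) * ‖y - x‖ := by
        rw [sqrt_mul pi_pos.le]
        ring

theorem stmt18 (n : ℕ) (M t : ℝ) (hM : 0 < M) (ht : 0 < t)
    (erf : ℝ → ℝ)
    (herf : ∀ z, erf z = 2 / Real.sqrt π * ∫ r in (0:ℝ)..z, Real.exp (-r^2))
    (u : EuclideanSpace ℝ (Fin n) → ℝ)
    (hosc : ∀ x y, |u x - u y| ≤ M * erf (‖x - y‖ / (4 * Real.sqrt t)))
    (x : EuclideanSpace ℝ (Fin n)) (hdiff : DifferentiableAt ℝ u x) :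
    ‖fderiv ℝ u x‖ ≤ M / (2 * Real.sqrt (π * t)) :=
  stmt18_general n M t hM erf herf u hosc x
end
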